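/- Define P on I(b) × I(L(b)) from Q on I(L(b)) by P(i, j) = Q(0_b :: j) + Q(j) if i = 0_b, and P(i, j) = Q(i :: j) otherwise (P is the additive shift of Q). If Q is uniform of degree d with value n, then P satisfies: (1) P(i,j) = 0 whenever deg(i) + deg(j) > d; (2) for every j with deg(j) = d, P(0_b, j) = n; and (3) for every i with deg(i) = d and i ≠ 0_b, P(i, empty-list-index) = 0. -/

import Mathlib

inductive BType : Type
  | unit : BType
  | sum : BType → BType → BType
  | prod : BType → BType → BType
  | list : BType → BType

mutual
  inductive Idx : BType → Type
    | star : Idx .unit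
    | inl {b₁ b₂ : BType} : Idx b₁ → Idx (.sum b₁ b₂)
    | inr {b₁ b₂ : BType} : Idx b₂ → Idx (.sum b₁ b₂)
    | pair {b₁ b₂ : BType} : Idx b₁ → Idx b₂ → Idx (.prod b₁ b₂)
    | list {b : BType} : IdxList b → Idx (.list b)
  inductive IdxList : BType → Type
    | nil {b : BType} : IdxList b
    | cons {b : BType} : Idx b → IdxList b → IdxList b
end

def lenList : {b : BType} → IdxList b → ℕ
  | _, .nil => 0
  | _, .cons _ l => 1 + lenList l

mutual
  def deg : {b : BType} → Idx b → ℕ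
    | _, .star => 0
    | _, .inl i => deg i
    | _, .inr i => deg i
    | _, .pair i j => deg i + deg j
    | _, .list l => lenList l + degList l
  def degList : {b : BType} → IdxList b → ℕ
    | _, .nil => 0
    | _, .cons i l => deg i + degList l
end

def zeroIdx : (b : BType) → Idx b
  | .unit => .star
  | .sum b₁ _ => .inl (zeroIdx b₁)
  | .prod b₁ b₂ => .pair (zeroIdx b₁) (zeroIdx b₂)
  | .list _ => .list .nil

theorem deg_zeroIdx (b : BType) : deg (zeroIdx b) = 0 := by
  induction b with
  | unit | list => rfl
  | sum b₁ b₂ ih₁ => simp only [zeroIdx, deg, ih₁]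
  | prod b₁ b₂ ih₁ ih₂ => simp only [zeroIdx, deg, ih₁, ih₂]

theorem deg_list_nil {b : BType} : deg (Idx.list (IdxList.nil : IdxList b)) = 0 := rfl

theorem deg_list_cons {b : BType} (i : Idx b) (j : IdxList b) :
    deg (Idx.list (.cons i j)) = deg i + deg (Idx.list j) + 1 := by
  simp only [deg, degList, lenList]
  omega

/-- Preservation of uniformity by list constructors: the additive shift `P` of a
uniform annotation `Q` of degree `d` with value `n` satisfies the three stated
properties. -/
theorem list_constructor_preserves_uniformity (b : BType) (d : ℕ) (n : ℚ)
    (Q : Idx (.list b) → ℚ)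
    (P : Idx b → IdxList b → ℚ)
    (hP0 : ∀ j : IdxList b,
      P (zeroIdx b) j = Q (.list (.cons (zeroIdx b) j)) + Q (.list j))
    (hP : ∀ (i : Idx b) (j : IdxList b), i ≠ zeroIdx b →
      P i j = Q (.list (.cons i j)))
    (huniform_zero : ∀ s : Idx (.list b), d < deg s → Q s = 0)
    (huniform_top : ∀ s : Idx (.list b), deg s = d → Q s = n) :
    (∀ (i : Idx b) (j : IdxList b), d < deg i + deg (Idx.list j) → P i j = 0) ∧
    (∀ j : IdxList b, deg (Idx.list j) = d → P (zeroIdx b) j = n) ∧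
    (∀ i : Idx b, deg i = d → i ≠ zeroIdx b → P i .nil = 0) := by
  have hQ_cons : ∀ i j, d ≤ deg i + deg (Idx.list j) → Q (.list (.cons i j)) = 0 :=
    fun i j h => huniform_zero _ (by rw [deg_list_cons]; omega)
  refine ⟨fun i j h => ?_, fun j hj => ?_, fun i hi hne => ?_⟩
  · by_cases hi : i = zeroIdx b
    · subst hi
      rw [deg_zeroIdx, zero_add] at h
      rw [hP0, hQ_cons _ _ (by rw [deg_zeroIdx]; omega), huniform_zero _ h, add_zero]
    · rw [hP i j hi, hQ_cons _ _ h.le]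
  · rw [hP0, hQ_cons _ _ (by rw [deg_zeroIdx]; omega), huniform_top _ hj, zero_add]
  · rw [hP i _ hne, hQ_cons _ _ (by rw [deg_list_nil]; omega)]
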